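/- Let f : ℝ^N × M^{m×N} → [0,+∞] be a normal integrand satisfying condition (C₁) with modulus ω. Then Zf satisfies the same condition with the same modulus: Zf(x₁,ξ) ≤ ω(|x₁−x₂|)(1 + Zf(x₂,ξ)) + Zf(x₂,ξ) for all x₁, x₂ ∈ ℝ^N and ξ ∈ M^{m×N}. -/

import Mathlib

/-!
Writing (C₁) as `f x₁ ζ ≤ c + (c + 1) f x₂ ζ` with `c = ω(|x₁ - x₂|)`, the right-hand side is
affine in `f x₂` with finite coefficients. Integrating over the unit cube (a set of measure one)
preserves this affine bound for every test field `φ`, and an affine map with finite coefficients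
commutes with infima, so the bound passes to `Zf`.
-/

open MeasureTheory Filter ENNReal Set

/-- The (sup-norm) gradient matrix of `φ` at `y`, as an `m × N` matrix. -/
noncomputable def grad {N m : ℕ} (φ : (Fin N → ℝ) → Fin m → ℝ) (y : Fin N → ℝ) :
    Fin m → Fin N → ℝ := fun i j => fderiv ℝ φ y (Pi.single j 1) i

/-- The open unit cube `Y = (0,1)^N`. -/
def unitCube (N : ℕ) : Set (Fin N → ℝ) := Set.univ.pi fun _ => Set.Ioo 0 1

/-- A normal integrand: jointly measurable and lower semicontinuous in the matrix variable. -/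
def NormalIntegrand {N m : ℕ} (f : (Fin N → ℝ) → (Fin m → Fin N → ℝ) → ℝ≥0∞) : Prop :=
  Measurable (Function.uncurry f) ∧ ∀ x, LowerSemicontinuous (f x)

/-- `W^{1,∞}_0(D;ℝ^m)` : Lipschitz maps vanishing on `∂D`. -/
def LipZero {N m : ℕ} (D : Set (Fin N → ℝ)) (φ : (Fin N → ℝ) → Fin m → ℝ) : Prop :=
  (∃ K, LipschitzWith K φ) ∧ ∀ x ∈ frontier D, φ x = 0

/-- `Zf(x,ξ) = inf { ∫_Y f(x, ξ + ∇φ) : φ ∈ W^{1,∞}_0(Y;ℝ^m) }`. -/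
noncomputable def Zfun {N m : ℕ} (f : (Fin N → ℝ) → (Fin m → Fin N → ℝ) → ℝ≥0∞)
    (x : Fin N → ℝ) (ξ : Fin m → Fin N → ℝ) : ℝ≥0∞ :=
  ⨅ (φ : (Fin N → ℝ) → Fin m → ℝ) (_ : LipZero (unitCube N) φ),
    ∫⁻ y in unitCube N, f x (ξ + grad φ y)

/-- Serrin-type condition (C₁) with modulus `ω`. -/
def SerrinC1 {N m : ℕ} (f : (Fin N → ℝ) → (Fin m → Fin N → ℝ) → ℝ≥0∞) (ω : ℝ → ℝ) : Prop :=
  (∀ t, 0 ≤ ω t) ∧ ContinuousAt ω 0 ∧ ω 0 = 0 ∧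
  ∀ (x₁ x₂ : Fin N → ℝ) (ξ : Fin m → Fin N → ℝ),
    f x₁ ξ ≤ ENNReal.ofReal (ω (dist x₁ x₂)) * (1 + f x₂ ξ) + f x₂ ξ

instance isProbabilityMeasure_restrict_unitCube (N : ℕ) :
    IsProbabilityMeasure (volume.restrict (unitCube N)) :=
  ⟨by simp [unitCube, volume_pi_pi, Real.volume_Ioo]⟩

theorem lintegral_le_const_add_mul {α : Type*} [MeasurableSpace α] {μ : Measure α}
    [IsProbabilityMeasure μ] {g₁ g₂ : α → ℝ≥0∞} {a b : ℝ≥0∞} (hb : b ≠ ∞)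
    (h : ∀ y, g₁ y ≤ a + b * g₂ y) :
    ∫⁻ y, g₁ y ∂μ ≤ a + b * ∫⁻ y, g₂ y ∂μ :=
  calc ∫⁻ y, g₁ y ∂μ ≤ ∫⁻ y, a + b * g₂ y ∂μ := lintegral_mono h
    _ = a + b * ∫⁻ y, g₂ y ∂μ := by
      rw [lintegral_add_left measurable_const, lintegral_const, measure_univ, mul_one,
        lintegral_const_mul' _ _ hb]

theorem Zfun_le_const_add_mul {N m : ℕ} {f : (Fin N → ℝ) → (Fin m → Fin N → ℝ) → ℝ≥0∞}
    {x₁ x₂ : Fin N → ℝ} {a b : ℝ≥0∞} (hb₀ : b ≠ 0) (hb : b ≠ ∞)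
    (h : ∀ ζ, f x₁ ζ ≤ a + b * f x₂ ζ) (ξ : Fin m → Fin N → ℝ) :
    Zfun f x₁ ξ ≤ a + b * Zfun f x₂ ξ :=
  calc Zfun f x₁ ξ
      ≤ ⨅ (φ : (Fin N → ℝ) → Fin m → ℝ) (_ : LipZero (unitCube N) φ),
          a + b * ∫⁻ y in unitCube N, f x₂ (ξ + grad φ y) :=
        le_iInf₂ fun φ hφ => (iInf₂_le φ hφ).trans (lintegral_le_const_add_mul hb fun _ => h _)
    _ = a + b * Zfun f x₂ ξ := by
      simp only [Zfun, ENNReal.mul_iInf_of_ne hb₀ hb, ENNReal.add_iInf]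

theorem stmt7_general {N m : ℕ} (f : (Fin N → ℝ) → (Fin m → Fin N → ℝ) → ℝ≥0∞)
    (ω : ℝ → ℝ) (h : SerrinC1 f ω) :
    ∀ (x₁ x₂ : Fin N → ℝ) (ξ : Fin m → Fin N → ℝ),
      Zfun f x₁ ξ ≤ ENNReal.ofReal (ω (dist x₁ x₂)) * (1 + Zfun f x₂ ξ) + Zfun f x₂ ξ := by
  intro x₁ x₂ ξ
  set c := ENNReal.ofReal (ω (dist x₁ x₂))
  have affine (t : ℝ≥0∞) : c * (1 + t) + t = c + (c + 1) * t := by ring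
  rw [affine]
  refine Zfun_le_const_add_mul (by simp) (by simp [c]) (fun ζ => ?_) ξ
  rw [← affine]
  exact h.2.2.2 x₁ x₂ ζ

theorem stmt7 {N m : ℕ} (f : (Fin N → ℝ) → (Fin m → Fin N → ℝ) → ℝ≥0∞)
    (hf : NormalIntegrand f) (ω : ℝ → ℝ) (h : SerrinC1 f ω) :
    ∀ (x₁ x₂ : Fin N → ℝ) (ξ : Fin m → Fin N → ℝ),
      Zfun f x₁ ξ ≤ ENNReal.ofReal (ω (dist x₁ x₂)) * (1 + Zfun f x₂ ξ) + Zfun f x₂ ξ :=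
  stmt7_general f ω h
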